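/- Let c ∈ A^(ℤ×ℤ) be a non-periodic configuration over a finite alphabet A with a direction of periodicity v (a nonzero v with σ_v c = c). Suppose there exist periodic configurations y, y' ∈ A^(ℤ×ℤ), a nonzero vector w ∈ ℤ×ℤ with ⟨v,w⟩ = 0, and integers t₀ ≤ t₁ such that c(u) = y(u) for every u with ⟨u,w⟩ ≥ t₁ and c(u) = y'(u) for every u with ⟨u,w⟩ ≤ t₀ (⟨·,·⟩ the standard dot product on ℤ×ℤ). Then every configuration x in the topological closure of the shift-orbit of c is a shift of c, a shift of y, or a shift of y'. Consequently, c is at level 1 in the subshift equal to the closure of its shift-orbit. -/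

import Mathlib

namespace CountableSubshift

/-- A configuration over alphabet `A` on the plane `ℤ × ℤ`. -/
abbrev Config (A : Type*) := ℤ × ℤ → A

variable {A : Type*}

/-- The shift by a vector `v`. -/
def shift (v : ℤ × ℤ) (x : Config A) : Config A := fun u => x (u + v)

/-- The shift-orbit of a configuration. -/
def orbit (x : Config A) : Set (Config A) := Set.range fun v => shift v x

variable [TopologicalSpace A]

/-- `Preceq x y` iff `x` belongs to the closure of the shift-orbit of `y`. -/
def Preceq (x y : Config A) : Prop := x ∈ closure (orbit y)

/-- Strict version of `Preceq`. -/
def Prec (x y : Config A) : Prop := Preceq x y ∧ ¬ Preceq y x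

/-- `x ≈ y` : mutual `Preceq`. -/
def OrbEquiv (x y : Config A) : Prop := Preceq x y ∧ Preceq y x

/-- A subshift: nonempty, closed and shift-invariant set of configurations. -/
def IsSubshift (X : Set (Config A)) : Prop :=
  X.Nonempty ∧ IsClosed X ∧ ∀ v : ℤ × ℤ, shift v '' X = X

/-- A configuration is periodic if it has two linearly independent vectors of periodicity. -/
def Periodic (x : Config A) : Prop :=
  ∃ v w : ℤ × ℤ, shift v x = x ∧ shift w x = x ∧ LinearIndependent ℤ ![v, w]

/-- `x` is at level 0 in `X`: it is `Preceq`-minimal in `X`. -/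
def Level0 (X : Set (Config A)) (x : Config A) : Prop :=
  x ∈ X ∧ ∀ y ∈ X, Preceq y x → Preceq x y

/-- `x` is at level 1 in `X`. -/
def Level1 (X : Set (Config A)) (x : Config A) : Prop :=
  x ∈ X ∧ ¬ Level0 X x ∧ ∀ y ∈ X, Prec y x → Level0 X y

/-- `x` is at level 2 in `X`. -/
def Level2 (X : Set (Config A)) (x : Config A) : Prop :=
  x ∈ X ∧ ¬ Level0 X x ∧ ¬ Level1 X x ∧ ∀ y ∈ X, Prec y x → Level0 X y ∨ Level1 X y

/-- The pattern `p` with (finite) domain `D` appears in `x` at position `u`. -/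
def AppearsAt (D : Finset (ℤ × ℤ)) (p : ℤ × ℤ → A) (x : Config A) (u : ℤ × ℤ) : Prop :=
  ∀ d ∈ D, x (u + d) = p d

/-- A subshift of finite type: the nonempty set of configurations avoiding a
finite family of forbidden patterns. -/
def IsSFT (X : Set (Config A)) : Prop :=
  X.Nonempty ∧ ∃ (n : ℕ) (D : Fin n → Finset (ℤ × ℤ)) (p : Fin n → ℤ × ℤ → A),
    X = {x : Config A | ∀ (i : Fin n) (u : ℤ × ℤ), ¬ AppearsAt (D i) (p i) x u}

/-- Every pattern appearing in `c` appears at infinitely many positions. -/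
def AllPatternsInfinite (c : Config A) : Prop :=
  ∀ (D : Finset (ℤ × ℤ)) (u : ℤ × ℤ),
    {u' : ℤ × ℤ | ∀ d ∈ D, c (u' + d) = c (u + d)}.Infinite

/-- The standard dot product on `ℤ × ℤ`. -/
def dot (u w : ℤ × ℤ) : ℤ := u.1 * w.1 + u.2 * w.2

open Filter Topology

lemma shift_shift (s t : ℤ × ℤ) (x : Config A) : shift s (shift t x) = shift (s + t) x := by
  funext u; simp [shift, add_assoc]

lemma shift_zero (x : Config A) : shift 0 x = x := by
  funext u; simp [shift]

lemma shift_mem_orbit (t : ℤ × ℤ) (x : Config A) : shift t x ∈ orbit x := ⟨t, rfl⟩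

lemma shift_zsmul (k : ℤ) (p : ℤ × ℤ) (x : Config A) (h : shift p x = x) :
    shift (k • p) x = x := by
  induction k using Int.induction_on with
  | zero => simpa using shift_zero x
  | succ n ih =>
      have : ((n : ℤ) + 1) • p = p + (n : ℤ) • p := by rw [add_smul, one_smul, add_comm]
      rw [this, ← shift_shift, ih, h]
  | pred n ih =>
      have hneg : shift (-p) x = x := by
        conv_lhs => rw [← h]
        rw [shift_shift, neg_add_cancel, shift_zero]
      have e : (-(n : ℤ) - 1) • p = -p + (-(n : ℤ)) • p := by
        rw [neg_smul, sub_smul, one_smul, neg_smul]; abel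
      rw [e, ← shift_shift, ih, hneg]

lemma lin_indep_det {a b : ℤ × ℤ} (h : LinearIndependent ℤ ![a, b]) :
    a.1 * b.2 - a.2 * b.1 ≠ 0 := by
  intro hd
  rw [LinearIndependent.pair_iff] at h
  have e1 := h b.2 (-a.2) (by
    apply Prod.ext <;> simp [Prod.smul_fst, Prod.smul_snd] <;> nlinarith)
  have e2 := h (-b.1) a.1 (by
    apply Prod.ext <;> simp [Prod.smul_fst, Prod.smul_snd] <;> nlinarith)
  have ha : a = 0 := by
    apply Prod.ext
    · simpa using e2.2
    · simpa using e1.2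
  have := h 1 0 (by rw [ha]; simp)
  exact one_ne_zero this.1

lemma periodic_orbit_finite {x : Config A} (h : Periodic x) : (orbit x).Finite := by
  obtain ⟨a, b, ha, hb, hind⟩ := h
  set d := a.1 * b.2 - a.2 * b.1 with hd_def
  have hd : d ≠ 0 := lin_indep_det hind
  have h1 : shift (d, 0) x = x := by
    have e : ((d, (0:ℤ)) : ℤ × ℤ) = b.2 • a + (-a.2) • b := by
      apply Prod.ext <;> simp [Prod.smul_fst, Prod.smul_snd, hd_def] <;> ring
    rw [e, ← shift_shift, shift_zsmul _ _ _ hb, shift_zsmul _ _ _ ha]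
  have h2 : shift (0, d) x = x := by
    have e : (((0:ℤ), d) : ℤ × ℤ) = (-b.1) • a + a.1 • b := by
      apply Prod.ext <;> simp [Prod.smul_fst, Prod.smul_snd, hd_def] <;> ring
    rw [e, ← shift_shift, shift_zsmul _ _ _ hb, shift_zsmul _ _ _ ha]
  set N : ℤ := |d| with hN_def
  have hN0 : 0 < N := abs_pos.mpr hd
  have h1' : shift (N, 0) x = x := by
    rcases abs_cases d with ⟨h', _⟩ | ⟨h', _⟩
    · rw [hN_def, h']; exact h1
    · have e : ((N, (0:ℤ)) : ℤ × ℤ) = (-1 : ℤ) • ((d, (0:ℤ)) : ℤ × ℤ) := by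
        apply Prod.ext <;> simp [hN_def, h']
      rw [e]; exact shift_zsmul _ _ _ h1
  have h2' : shift (0, N) x = x := by
    rcases abs_cases d with ⟨h', _⟩ | ⟨h', _⟩
    · rw [hN_def, h']; exact h2
    · have e : (((0:ℤ), N) : ℤ × ℤ) = (-1 : ℤ) • (((0:ℤ), d) : ℤ × ℤ) := by
        apply Prod.ext <;> simp [hN_def, h']
      rw [e]; exact shift_zsmul _ _ _ h2
  have hsub : orbit x ⊆ (fun t : ℤ × ℤ => shift t x) '' (Set.Ico 0 N ×ˢ Set.Ico 0 N) := by
    rintro z ⟨⟨t1, t2⟩, rfl⟩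
    refine ⟨(t1 % N, t2 % N), ⟨⟨Int.emod_nonneg _ hN0.ne', Int.emod_lt_of_pos _ hN0⟩,
      ⟨Int.emod_nonneg _ hN0.ne', Int.emod_lt_of_pos _ hN0⟩⟩, ?_⟩
    show shift (t1 % N, t2 % N) x = shift (t1, t2) x
    have e : ((t1, t2) : ℤ × ℤ) = (t1 % N, t2 % N) + (t1 / N) • ((N, (0:ℤ)) : ℤ × ℤ)
        + (t2 / N) • (((0:ℤ), N) : ℤ × ℤ) := by
      apply Prod.ext <;> simp [Prod.smul_fst, Prod.smul_snd]
      · have := Int.mul_ediv_add_emod t1 N; linarith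
      · have := Int.mul_ediv_add_emod t2 N; linarith
    conv_rhs => rw [e]
    rw [← shift_shift, ← shift_shift, shift_zsmul _ _ _ h2', shift_zsmul _ _ _ h1']
  exact Set.Finite.subset (Set.Finite.image _ ((Set.finite_Ico 0 N).prod (Set.finite_Ico 0 N))) hsub

lemma periodic_shift {x : Config A} (t : ℤ × ℤ) (h : Periodic x) : Periodic (shift t x) := by
  obtain ⟨a, b, ha, hb, hind⟩ := h
  refine ⟨a, b, ?_, ?_, hind⟩
  · rw [shift_shift, add_comm, ← shift_shift, ha]
  · rw [shift_shift, add_comm, ← shift_shift, hb]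

lemma orbit_closed_of_periodic [T1Space A] {x : Config A} (h : Periodic x) :
    closure (orbit x) = orbit x :=
  (periodic_orbit_finite h).isClosed.closure_eq

lemma preceq_periodic [T1Space A] {z c : Config A} (hz : Periodic z) (h : Preceq c z) :
    ∃ s, c = shift s z := by
  rw [Preceq, orbit_closed_of_periodic hz] at h
  obtain ⟨s, hs⟩ := h
  exact ⟨s, hs.symm⟩

lemma periodic_minimal [T1Space A] {z u : Config A} (hz : Periodic z) (h : Preceq u z) : Preceq z u := by
  rw [Preceq, orbit_closed_of_periodic hz] at h
  obtain ⟨s, hs⟩ := h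
  refine subset_closure ⟨-s, ?_⟩
  show shift (-s) u = z
  rw [← hs]
  show shift (-s) (shift s z) = z
  rw [shift_shift, neg_add_cancel, shift_zero]


lemma finite_parallel {c : Config A} {v : ℤ × ℤ} (hv : v ≠ 0) (hvc : shift v c = c) :
    ∃ F : Set (Config A), F.Finite ∧ F ⊆ orbit c ∧
      ∀ u : ℤ × ℤ, u.1 * v.2 = u.2 * v.1 → shift u c ∈ F := by
  by_cases h1 : v.1 ≠ 0
  · refine ⟨(fun r : ℤ => shift (r, r * v.2 / v.1) c) '' Set.Ico 0 |v.1|,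
      (Set.finite_Ico _ _).image _, ?_, ?_⟩
    · rintro z ⟨r, _, rfl⟩; exact ⟨_, rfl⟩
    · intro u hu
      set k := u.1 / v.1 with hk
      set r := u.1 % v.1 with hr
      have he : v.1 * k + r = u.1 := Int.mul_ediv_add_emod u.1 v.1
      have hdecomp : u = ((r, u.2 - k * v.2) : ℤ × ℤ) + k • v := by
        rw [Prod.ext_iff]
        simp only [Prod.fst_add, Prod.snd_add, Prod.smul_fst, Prod.smul_snd, smul_eq_mul]
        constructor
        · linarith
        · ring
      have hval : shift u c = shift (r, u.2 - k * v.2) c := by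
        conv_lhs => rw [hdecomp]
        rw [← shift_shift, shift_zsmul k v c hvc]
      have hpar : r * v.2 = (u.2 - k * v.2) * v.1 := by linear_combination hu + v.2 * he
      have hu2 : u.2 - k * v.2 = r * v.2 / v.1 := by
        rw [hpar, Int.mul_ediv_cancel _ h1]
      refine ⟨r, ⟨Int.emod_nonneg _ h1, Int.emod_lt_abs _ h1⟩, ?_⟩
      show shift (r, r * v.2 / v.1) c = shift u c
      rw [hval, hu2]
  · push_neg at h1
    have h2 : v.2 ≠ 0 := by
      intro h2; exact hv (Prod.ext h1 h2)
    refine ⟨(fun r : ℤ => shift (0, r) c) '' Set.Ico 0 |v.2|,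
      (Set.finite_Ico _ _).image _, ?_, ?_⟩
    · rintro z ⟨r, _, rfl⟩; exact ⟨_, rfl⟩
    · intro u hu
      rw [h1, mul_zero] at hu
      have hu1 : u.1 = 0 := by
        rcases mul_eq_zero.mp hu with h | h
        · exact h
        · exact absurd h h2
      set k := u.2 / v.2 with hk
      set r := u.2 % v.2 with hr
      have he : v.2 * k + r = u.2 := Int.mul_ediv_add_emod u.2 v.2
      have hdecomp : u = (((0 : ℤ), r) : ℤ × ℤ) + k • v := by
        rw [Prod.ext_iff]
        simp only [Prod.fst_add, Prod.snd_add, Prod.smul_fst, Prod.smul_snd, smul_eq_mul, h1,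
          mul_zero, zero_add]
        constructor
        · exact hu1
        · linarith
      have hval : shift u c = shift (0, r) c := by
        conv_lhs => rw [hdecomp]
        rw [← shift_shift, shift_zsmul k v c hvc]
      exact ⟨r, ⟨Int.emod_nonneg _ h2, Int.emod_lt_abs _ h2⟩, hval.symm⟩

lemma pigeon {α : Type*} {S : Set ℕ} (hS : S.Infinite) {F : Set α} (hF : F.Finite)
    {g : ℕ → α} (hg : ∀ n ∈ S, g n ∈ F) : ∃ z ∈ F, {n | n ∈ S ∧ g n = z}.Infinite := by
  haveI := hS.to_subtype
  haveI := hF.to_subtype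
  obtain ⟨z, hz⟩ := Finite.exists_infinite_fiber (fun n : S => (⟨g n, hg n n.2⟩ : F))
  refine ⟨z.1, z.2, ?_⟩
  rw [Set.infinite_coe_iff] at hz
  have : Set.InjOn (fun n : S => (n : ℕ))
      {n : S | (fun n : S => (⟨g n, hg n n.2⟩ : F)) n = z} := fun a _ b _ h => Subtype.ext h
  have himg := Set.Infinite.image this hz
  refine himg.mono ?_
  rintro m ⟨⟨n, hnS⟩, hn, rfl⟩
  exact ⟨hnS, congrArg Subtype.val hn⟩

lemma neBot_aux {S : Set ℕ} (hS : S.Infinite) : (atTop ⊓ 𝓟 S).NeBot := by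
  rw [← Filter.frequently_mem_iff_neBot]
  exact Nat.frequently_atTop_iff_infinite.mpr hS

lemma dot_add (a b w : ℤ × ℤ) : dot (a + b) w = dot a w + dot b w := by
  simp [dot]; ring

lemma half_lemma [DiscreteTopology A] {c x y : Config A} (hy : Periodic y) (w : ℤ × ℤ) (t₁ : ℤ)
    (hupper : ∀ u, t₁ ≤ dot u w → c u = y u) (V : ℕ → ℤ × ℤ)
    (hV : Tendsto (fun n => shift (V n) c) atTop (𝓝 x))
    (S : Set ℕ) (hS : S.Infinite)
    (hpos : ∀ M : ℤ, ∀ᶠ n in atTop ⊓ 𝓟 S, M ≤ dot (V n) w) :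
    ∃ t, x = shift t y := by
  set l := atTop ⊓ 𝓟 S with hl
  haveI : l.NeBot := neBot_aux hS
  have hVl : Tendsto (fun n => shift (V n) c) l (𝓝 x) := hV.mono_left inf_le_left
  have hVy : Tendsto (fun n => shift (V n) y) l (𝓝 x) := by
    rw [tendsto_pi_nhds]
    intro i
    have hc := (tendsto_pi_nhds.mp hVl) i
    rw [nhds_discrete, tendsto_pure] at hc ⊢
    filter_upwards [hc, hpos (t₁ - dot i w)] with n hn1 hn2
    have hge : t₁ ≤ dot (i + V n) w := by
      rw [dot_add]; linarith
    show y (i + V n) = x i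
    rw [← hupper _ hge]
    exact hn1
  have hx : x ∈ closure (orbit y) :=
    mem_closure_of_tendsto hVy (Eventually.of_forall fun n => shift_mem_orbit _ _)
  rw [orbit_closed_of_periodic hy] at hx
  obtain ⟨t, ht⟩ := hx
  exact ⟨t, ht.symm⟩

lemma cross_zero {u v w : ℤ × ℤ} (hw : w ≠ 0) (hu : dot u w = 0) (hv : dot v w = 0) :
    u.1 * v.2 = u.2 * v.1 := by
  simp only [dot] at hu hv
  have h1 : (u.1 * v.2 - u.2 * v.1) * w.1 = 0 := by linear_combination v.2 * hu - u.2 * hv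
  have h2 : (u.1 * v.2 - u.2 * v.1) * w.2 = 0 := by linear_combination u.1 * hv - v.1 * hu
  have hw' : w.1 ≠ 0 ∨ w.2 ≠ 0 := by
    by_contra h
    push_neg at h
    exact hw (Prod.ext h.1 h.2)
  rcases hw' with h | h
  · have := mul_eq_zero.mp h1
    rcases this with h' | h'
    · linarith
    · exact absurd h' h
  · have := mul_eq_zero.mp h2
    rcases this with h' | h'
    · linarith
    · exact absurd h' h


lemma dot_sub (a b w : ℤ × ℤ) : dot (a - b) w = dot a w - dot b w := by
  simp [dot]; ring

lemma dot_neg (a w : ℤ × ℤ) : dot a (-w) = -dot a w := by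
  simp [dot]; ring

lemma classify [Finite A] [DiscreteTopology A] {c : Config A}
    (v : ℤ × ℤ) (hv : v ≠ 0) (hvc : shift v c = c)
    {y y' : Config A} (hy : Periodic y) (hy' : Periodic y')
    (w : ℤ × ℤ) (hw : w ≠ 0) (hvw : dot v w = 0)
    (t₀ t₁ : ℤ)
    (hupper : ∀ u : ℤ × ℤ, t₁ ≤ dot u w → c u = y u)
    (hlower : ∀ u : ℤ × ℤ, dot u w ≤ t₀ → c u = y' u)
    {x : Config A} (hx : x ∈ closure (orbit c)) :
    (∃ t, x = shift t c) ∨ (∃ t, x = shift t y) ∨ (∃ t, x = shift t y') := by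
  obtain ⟨f, hf1, hf2⟩ := mem_closure_iff_seq_limit.mp hx
  choose V hV using hf1
  have hVt : Tendsto (fun n => shift (V n) c) atTop (𝓝 x) :=
    hf2.congr fun n => (hV n).symm
  set T : ℕ → ℤ := fun n => dot (V n) w with hT
  by_cases hA : ∃ t : ℤ, {n | T n = t}.Infinite
  · -- bounded case: x is a shift of c
    left
    obtain ⟨tval, hSinf⟩ := hA
    obtain ⟨n₀, hn₀⟩ := hSinf.nonempty
    obtain ⟨F, hFfin, hForb, hFmem⟩ := finite_parallel hv hvc
    have hg : ∀ n ∈ {n | T n = tval}, shift (V n) c ∈ shift (V n₀) '' F := by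
      intro n hn
      have hd0 : dot (V n - V n₀) w = 0 := by
        rw [dot_sub]
        have h1 : T n = tval := hn
        have h2 : T n₀ = tval := hn₀
        simp only [hT] at h1 h2
        rw [h1, h2, sub_self]
      have hpar := cross_zero hw hd0 hvw
      refine ⟨_, hFmem _ hpar, ?_⟩
      rw [shift_shift]
      have : V n₀ + (V n - V n₀) = V n := by abel
      rw [this]
    obtain ⟨z, hzF, hSz⟩ := pigeon hSinf (hFfin.image _) hg
    haveI := neBot_aux hSz
    have h1 : Tendsto (fun n => shift (V n) c)
        (atTop ⊓ 𝓟 {n | n ∈ {n | T n = tval} ∧ shift (V n) c = z}) (𝓝 x) :=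
      hVt.mono_left inf_le_left
    have h2 : Tendsto (fun n => shift (V n) c)
        (atTop ⊓ 𝓟 {n | n ∈ {n | T n = tval} ∧ shift (V n) c = z}) (𝓝 z) := by
      refine Tendsto.congr' ?_ tendsto_const_nhds
      have := eventually_inf_principal (f := atTop)
        (s := {n | n ∈ {n | T n = tval} ∧ shift (V n) c = z})
        (p := fun n => z = shift (V n) c)
      exact this.mpr (Eventually.of_forall fun n hn => hn.2.symm)
    have hxz : x = z := tendsto_nhds_unique h1 h2
    obtain ⟨f₀, hf₀F, hz'⟩ := hzF
    obtain ⟨s, hs⟩ := hForb hf₀F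
    refine ⟨V n₀ + s, ?_⟩
    rw [hxz, ← hz', ← hs]
    show shift (V n₀) (shift s c) = shift (V n₀ + s) c
    rw [shift_shift]
  · push_neg at hA
    have hfin : ∀ t : ℤ, {n | T n = t}.Finite := fun t => hA t
    have hbig : ∀ M : ℤ, {n | T n ∈ Set.Icc (-M) M}.Finite := fun M =>
      ((Set.finite_Icc (-M) M).biUnion (fun t _ => hfin t)).subset
        (fun n hn => Set.mem_biUnion hn rfl)
    have hev : ∀ M : ℤ, ∀ᶠ n in atTop, T n ∉ Set.Icc (-M) M := fun M => by
      have := Set.Finite.eventually_cofinite_notMem (hbig M)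
      rwa [Nat.cofinite_eq_atTop] at this
    have hunion : ({n | 0 < T n} ∪ {n | T n < 0}).Infinite := by
      by_contra h
      rw [Set.not_infinite] at h
      have huniv : (Set.univ : Set ℕ).Finite := by
        refine (h.union (hfin 0)).subset ?_
        intro n _
        rcases lt_trichotomy (T n) 0 with h' | h' | h'
        · exact Or.inl (Or.inr h')
        · exact Or.inr h'
        · exact Or.inl (Or.inl h')
      exact Set.infinite_univ huniv
    rcases Set.infinite_union.mp hunion with hS | hS
    · right; left
      refine half_lemma hy w t₁ hupper V hVt {n | 0 < T n} hS fun M => ?_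
      have h1 := (hev |M|).filter_mono (inf_le_left (b := 𝓟 {n | 0 < T n}))
      have h2 : ∀ᶠ n in atTop ⊓ 𝓟 {n | 0 < T n}, n ∈ {n | 0 < T n} :=
        eventually_inf_principal.mpr (Eventually.of_forall fun n h => h)
      filter_upwards [h1, h2] with n hn1 hn2
      simp only [Set.mem_Icc, not_and_or, not_le] at hn1
      have hM := le_abs_self M
      have hM0 := abs_nonneg M
      have hn2' : 0 < T n := hn2
      rcases hn1 with h' | h'
      · linarith
      · linarith
    · right; right
      refine half_lemma hy' (-w) (-t₀) (fun u hu => hlower u ?_) V hVt {n | T n < 0} hS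
        fun M => ?_
      · rw [dot_neg] at hu; linarith
      · have h1 := (hev |M|).filter_mono (inf_le_left (b := 𝓟 {n | T n < 0}))
        have h2 : ∀ᶠ n in atTop ⊓ 𝓟 {n | T n < 0}, n ∈ {n | T n < 0} :=
          eventually_inf_principal.mpr (Eventually.of_forall fun n h => h)
        filter_upwards [h1, h2] with n hn1 hn2
        rw [dot_neg]
        simp only [Set.mem_Icc, not_and_or, not_le] at hn1
        have hM := le_abs_self M
        have hM0 := abs_nonneg M
        have hn2' : T n < 0 := hn2
        rcases hn1 with h' | h'
        · linarith
        · linarith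


lemma dot_smul (k : ℤ) (a w : ℤ × ℤ) : dot (k • a) w = k * dot a w := by
  simp [dot, Prod.smul_fst, Prod.smul_snd]; ring

lemma shift_y_mem [DiscreteTopology A] {c y : Config A} (hy : Periodic y)
    (w : ℤ × ℤ) (hw : w ≠ 0) (t₁ : ℤ)
    (hupper : ∀ u, t₁ ≤ dot u w → c u = y u) :
    ∃ t, shift t y ∈ closure (orbit c) := by
  have hdww : 1 ≤ dot w w := by
    have hw' : w.1 ≠ 0 ∨ w.2 ≠ 0 := by
      by_contra h
      push_neg at h
      exact hw (Prod.ext h.1 h.2)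
    have h1 : 0 ≤ w.1 * w.1 := mul_self_nonneg _
    have h2 : 0 ≤ w.2 * w.2 := mul_self_nonneg _
    have hpos : 0 < dot w w := by
      rcases hw' with h | h
      · have := mul_self_pos.mpr h
        simp only [dot]; linarith
      · have := mul_self_pos.mpr h
        simp only [dot]; linarith
    omega
  obtain ⟨z, hzorb, hSz⟩ := pigeon Set.infinite_univ (periodic_orbit_finite hy)
    (g := fun n : ℕ => shift ((n : ℤ) • w) y) (fun n _ => shift_mem_orbit _ _)
  haveI := neBot_aux hSz
  set l := atTop ⊓ 𝓟 {n : ℕ | n ∈ Set.univ ∧ shift ((n : ℤ) • w) y = z} with hl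
  have hmem : ∀ᶠ n : ℕ in l, shift ((n : ℤ) • w) y = z := by
    refine eventually_inf_principal.mpr (Eventually.of_forall fun n hn => hn.2)
  have hVz : Tendsto (fun n : ℕ => shift ((n : ℤ) • w) c) l (𝓝 z) := by
    rw [tendsto_pi_nhds]
    intro i
    rw [nhds_discrete, tendsto_pure]
    have hbig : ∀ᶠ n : ℕ in l, t₁ ≤ dot (i + (n : ℤ) • w) w := by
      refine Eventually.filter_mono inf_le_left ?_
      filter_upwards [eventually_ge_atTop (t₁ - dot i w).toNat] with n hn
      have h3 : ((t₁ - dot i w).toNat : ℤ) ≤ (n : ℤ) := Int.ofNat_le.mpr hn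
      have h4 : t₁ - dot i w ≤ ((t₁ - dot i w).toNat : ℤ) := Int.self_le_toNat _
      have h5 : (n : ℤ) ≤ (n : ℤ) * dot w w :=
        le_mul_of_one_le_right (Int.natCast_nonneg n) hdww
      rw [dot_add, dot_smul]
      linarith
    filter_upwards [hmem, hbig] with n hn1 hn2
    show c (i + (n : ℤ) • w) = z i
    rw [hupper _ hn2]
    exact congrFun hn1 i
  have hz : z ∈ closure (orbit c) :=
    mem_closure_of_tendsto hVz (Eventually.of_forall fun n => shift_mem_orbit _ _)
  obtain ⟨t, ht⟩ := hzorb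
  exact ⟨t, by rw [show shift t y = z from ht]; exact hz⟩

theorem stmt8 {A : Type*} [Fintype A] [Nonempty A] [TopologicalSpace A] [DiscreteTopology A]
    (c : Config A) (hcnp : ¬ Periodic c)
    (v : ℤ × ℤ) (hv : v ≠ 0) (hvc : shift v c = c)
    (y y' : Config A) (hy : Periodic y) (hy' : Periodic y')
    (w : ℤ × ℤ) (hw : w ≠ 0) (hvw : dot v w = 0)
    (t₀ t₁ : ℤ) (ht : t₀ ≤ t₁)
    (hupper : ∀ u : ℤ × ℤ, t₁ ≤ dot u w → c u = y u)
    (hlower : ∀ u : ℤ × ℤ, dot u w ≤ t₀ → c u = y' u) :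
    (∀ x ∈ closure (orbit c),
        (∃ t : ℤ × ℤ, x = shift t c) ∨ (∃ t : ℤ × ℤ, x = shift t y) ∨
          (∃ t : ℤ × ℤ, x = shift t y')) ∧
      Level1 (closure (orbit c)) c := by
  have hcl : ∀ x ∈ closure (orbit c),
      (∃ t : ℤ × ℤ, x = shift t c) ∨ (∃ t : ℤ × ℤ, x = shift t y) ∨
        (∃ t : ℤ × ℤ, x = shift t y') :=
    fun x hx => classify v hv hvc hy hy' w hw hvw t₀ t₁ hupper hlower hx
  refine ⟨hcl, subset_closure ⟨0, shift_zero c⟩, ?_, ?_⟩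
  · intro hL0
    obtain ⟨t, htmem⟩ := shift_y_mem hy w hw t₁ hupper
    have hzy : Preceq c (shift t y) := hL0.2 _ htmem htmem
    obtain ⟨s, hs⟩ := preceq_periodic (periodic_shift t hy) hzy
    exact hcnp (hs ▸ periodic_shift s (periodic_shift t hy))
  · intro u huX hprec
    rcases hcl u huX with ⟨t, rfl⟩ | ⟨t, rfl⟩ | ⟨t, rfl⟩
    · exfalso
      apply hprec.2
      refine subset_closure ⟨-t, ?_⟩
      show shift (-t) (shift t c) = c
      rw [shift_shift, neg_add_cancel, shift_zero]
    · exact ⟨huX, fun a _ hpa => periodic_minimal (periodic_shift t hy) hpa⟩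
    · exact ⟨huX, fun a _ hpa => periodic_minimal (periodic_shift t hy') hpa⟩

end CountableSubshift
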